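/- arXiv:2211.01529 — 6 statements merged into one kernel-verified Lean document; each statement's English description precedes it below -/
import Mathlib

section
/- Let λ > 0, 0 < q < ∞ and b ∈ ℝ. There exist constants c, C > 0 depending only on λ, q, b such that for every j₀ ∈ ℕ and every sequence (ξ_k)_{k≥0} of nonnegative reals, c · Σ_{j=j₀}^∞ 2^{-jλq}(1+j)^{bq} ξ_j^q ≤ Σ_{j=j₀}^∞ 2^{-jλq}(1+j)^{bq} (Σ_{k=j₀}^{j} ξ_k)^q ≤ C · Σ_{j=j₀}^∞ 2^{-jλq}(1+j)^{bq} ξ_j^q. -/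
/-!
The lower bound holds with `c = 1`, as `ξ_j` is a term of its own partial sum. For the upper
bound let `θ = 2^{-λq/2}`. With `T = ∑_{i ≤ n} θ^{i-n} a_i^q` each term satisfies
`a_i ≤ θ^{(n-i)/q} T^{1/q}`, so summing a geometric series gives
`(∑_{i ≤ n} a_i)^q ≤ (1 - θ^{1/q})^{-q} T` for every `q > 0`, with no convexity needed.
The weight `w_n = 2^{-nλq}(1+n)^{bq}` satisfies `w_{i+k} ≤ w_i · θ^k (1+k)^{|bq|} · θ^k`: one
factor `θ^k` absorbs the loss `θ^{i-n}`, and what remains is a summable kernel `g`. After this,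
summing over `n` is a convolution with `g`, so the constant is `(1 - θ^{1/q})^{-q} ∑ g`.
-/

open scoped ENNReal
open Finset HasAntidiagonal

lemma summable_geometric_mul_one_add_rpow {θ : ℝ} (h0 : 0 ≤ θ) (h1 : θ < 1) (t : ℝ) :
    Summable fun k : ℕ => θ ^ k * (1 + (k : ℝ)) ^ t := by
  set N := ⌈t⌉₊
  have hθ : ‖θ‖ < 1 := by rwa [Real.norm_of_nonneg h0]
  have hpoly : Summable fun k : ℕ => θ ^ k * (1 + (k : ℝ)) ^ N := by
    simp_rw [add_comm (1 : ℝ), add_pow, one_pow, mul_one, mul_sum]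
    refine summable_sum fun m _ => ?_
    exact ((summable_pow_mul_geometric_of_norm_lt_one m hθ).mul_left (N.choose m : ℝ)).congr
      fun k => by ring
  refine hpoly.of_nonneg_of_le (fun k => by positivity) fun k => ?_
  gcongr
  calc (1 + (k : ℝ)) ^ t ≤ (1 + (k : ℝ)) ^ (N : ℝ) :=
        Real.rpow_le_rpow_of_exponent_le (by linarith [k.cast_nonneg (α := ℝ)]) (Nat.le_ceil t)
    _ = (1 + (k : ℝ)) ^ N := Real.rpow_natCast _ N

lemma sum_range_le_of_le_geometric {ρ M : ℝ} (hρ0 : 0 ≤ ρ) (hρ1 : ρ < 1) (hM : 0 ≤ M)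
    {a : ℕ → ℝ} {n : ℕ} (ha : ∀ i ≤ n, a i ≤ ρ ^ (n - i) * M) :
    ∑ i ∈ range (n + 1), a i ≤ M / (1 - ρ) := by
  have hgeom : ∑ i ∈ range (n + 1), ρ ^ i ≤ 1 / (1 - ρ) := by
    simpa [← range_eq_Ico] using geom_sum_Ico_le_of_lt_one (m := 0) (n := n + 1) hρ0 hρ1
  calc ∑ i ∈ range (n + 1), a i ≤ ∑ i ∈ range (n + 1), ρ ^ (n - i) * M :=
        sum_le_sum fun i hi => ha i (Nat.lt_succ_iff.mp (mem_range.mp hi))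
    _ = (∑ i ∈ range (n + 1), ρ ^ i) * M := by
        rw [← sum_mul]
        congr 1
        simpa using sum_range_reflect (fun i => ρ ^ i) (n + 1)
    _ ≤ 1 / (1 - ρ) * M := by gcongr
    _ = M / (1 - ρ) := by ring

lemma rpow_sum_range_le {q θ : ℝ} (hq : 0 < q) (hθ0 : 0 < θ) (hθ1 : θ < 1) {a : ℕ → ℝ}
    (ha : ∀ i, 0 ≤ a i) (n : ℕ) :
    (∑ i ∈ range (n + 1), a i) ^ q ≤
      (1 - θ ^ q⁻¹) ^ (-q) * ∑ i ∈ range (n + 1), a i ^ q / θ ^ (n - i) := by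
  set T := ∑ i ∈ range (n + 1), a i ^ q / θ ^ (n - i)
  have hT : 0 ≤ T := sum_nonneg fun i _ => by have := ha i; positivity
  have hρ1 : θ ^ q⁻¹ < 1 := Real.rpow_lt_one hθ0.le hθ1 (inv_pos.mpr hq)
  have hterm : ∀ i ≤ n, a i ≤ (θ ^ q⁻¹) ^ (n - i) * T ^ q⁻¹ := by
    intro i hi
    have hle : a i ^ q / θ ^ (n - i) ≤ T :=
      single_le_sum (f := fun i => a i ^ q / θ ^ (n - i)) (fun k _ => by have := ha k; positivity)
        (mem_range.mpr (Nat.lt_succ_of_le hi))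
    rw [Real.rpow_pow_comm hθ0.le, ← Real.mul_rpow (by positivity) hT,
      Real.le_rpow_inv_iff_of_pos (ha i) (by positivity) hq, ← div_le_iff₀' (by positivity)]
    exact hle
  calc (∑ i ∈ range (n + 1), a i) ^ q ≤ (T ^ q⁻¹ / (1 - θ ^ q⁻¹)) ^ q :=
        Real.rpow_le_rpow (sum_nonneg fun i _ => ha i)
          (sum_range_le_of_le_geometric (by positivity) hρ1 (by positivity) hterm) hq.le
    _ = (1 - θ ^ q⁻¹) ^ (-q) * T := by
        rw [Real.div_rpow (by positivity) (sub_pos.mpr hρ1).le, Real.rpow_inv_rpow hT hq.ne',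
          Real.rpow_neg (sub_pos.mpr hρ1).le, div_eq_inv_mul]

lemma one_add_add_rpow_le {u v : ℝ} (hu : 0 ≤ u) (hv : 0 ≤ v) (s : ℝ) :
    (1 + (u + v)) ^ s ≤ (1 + u) ^ s * (1 + v) ^ |s| := by
  rcases le_or_gt 0 s with hs | hs
  · rw [abs_of_nonneg hs, ← Real.mul_rpow (by positivity) (by positivity)]
    exact Real.rpow_le_rpow (by positivity) (by nlinarith) hs
  · calc (1 + (u + v)) ^ s ≤ (1 + u) ^ s :=
          Real.rpow_le_rpow_of_nonpos (by positivity) (by linarith) hs.le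
      _ ≤ (1 + u) ^ s * (1 + v) ^ |s| :=
          le_mul_of_one_le_right (by positivity) (Real.one_le_rpow (by linarith) (abs_nonneg s))

theorem ENNReal.tsum_mul_tsum_eq_tsum_sum_range (f g : ℕ → ℝ≥0∞) :
    (∑' n, f n) * ∑' n, g n = ∑' n, ∑ k ∈ range (n + 1), f k * g (n - k) := by
  calc (∑' n, f n) * ∑' n, g n = ∑' (k) (l), f k * g l := by
        rw [← ENNReal.tsum_mul_right]
        simp_rw [← ENNReal.tsum_mul_left]
    _ = ∑' p : ℕ × ℕ, f p.1 * g p.2 := ENNReal.tsum_prod.symm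
    _ = ∑' p : Σ n : ℕ, antidiagonal n, f p.2.1.1 * g p.2.1.2 :=
        (sigmaAntidiagonalEquivProd.tsum_eq (fun p : ℕ × ℕ => f p.1 * g p.2)).symm
    _ = ∑' n, ∑ kl ∈ antidiagonal n, f kl.1 * g kl.2 := by
        rw [ENNReal.tsum_sigma']
        simp_rw [Finset.tsum_subtype (antidiagonal _) fun kl => f kl.1 * g kl.2]
    _ = _ := by simp_rw [Nat.sum_antidiagonal_eq_sum_range_succ fun k l => f k * g l]

lemma sum_Icc_add_eq_sum_range {M : Type*} [AddCommMonoid M] (f : ℕ → M) (m n : ℕ) :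
    ∑ k ∈ Icc m (m + n), f k = ∑ i ∈ range (n + 1), f (m + i) := by
  rw [← Ico_add_one_right_eq_Icc, sum_Ico_eq_sum_range, add_assoc, Nat.add_sub_cancel_left]

lemma one_sub_rpow_inv_rpow_neg_pos {q θ : ℝ} (hq : 0 < q) (hθ0 : 0 ≤ θ) (hθ1 : θ < 1) :
    0 < (1 - θ ^ q⁻¹) ^ (-q) :=
  Real.rpow_pos_of_pos (sub_pos.mpr (Real.rpow_lt_one hθ0 hθ1 (inv_pos.mpr hq))) _

section Hardy

variable {q θ : ℝ} {w g x : ℕ → ℝ}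

lemma mul_rpow_sum_range_le (hq : 0 < q) (hθ0 : 0 < θ) (hθ1 : θ < 1) (hw : ∀ n, 0 ≤ w n)
    (hx : ∀ i, 0 ≤ x i) (hwg : ∀ i k, w (i + k) ≤ w i * g k * θ ^ k) (n : ℕ) :
    w n * (∑ i ∈ range (n + 1), x i) ^ q ≤
      (1 - θ ^ q⁻¹) ^ (-q) * ∑ i ∈ range (n + 1), w i * x i ^ q * g (n - i) := by
  have hK := (one_sub_rpow_inv_rpow_neg_pos hq hθ0.le hθ1).le
  calc w n * (∑ i ∈ range (n + 1), x i) ^ q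
      ≤ w n * ((1 - θ ^ q⁻¹) ^ (-q) * ∑ i ∈ range (n + 1), x i ^ q / θ ^ (n - i)) :=
        mul_le_mul_of_nonneg_left (rpow_sum_range_le hq hθ0 hθ1 hx n) (hw n)
    _ = (1 - θ ^ q⁻¹) ^ (-q) * ∑ i ∈ range (n + 1), w n / θ ^ (n - i) * x i ^ q := by
        rw [mul_left_comm, mul_sum]
        congr 1
        refine sum_congr rfl fun i _ => by ring
    _ ≤ (1 - θ ^ q⁻¹) ^ (-q) * ∑ i ∈ range (n + 1), w i * x i ^ q * g (n - i) := by
        refine mul_le_mul_of_nonneg_left (sum_le_sum fun i hi => ?_) hK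
        have hin : i + (n - i) = n := Nat.add_sub_cancel' (Nat.lt_succ_iff.mp (mem_range.mp hi))
        have := hx i
        calc w n / θ ^ (n - i) * x i ^ q ≤ w i * g (n - i) * x i ^ q := by
              gcongr
              rw [div_le_iff₀ (by positivity)]
              simpa only [hin] using hwg i (n - i)
          _ = w i * x i ^ q * g (n - i) := by ring

theorem tsum_ofReal_mul_rpow_sum_range_le (hq : 0 < q) (hθ0 : 0 < θ) (hθ1 : θ < 1)
    (hw : ∀ n, 0 ≤ w n) (hg : ∀ k, 0 ≤ g k) (hx : ∀ i, 0 ≤ x i)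
    (hwg : ∀ i k, w (i + k) ≤ w i * g k * θ ^ k) :
    ∑' n, ENNReal.ofReal (w n * (∑ i ∈ range (n + 1), x i) ^ q) ≤
      ENNReal.ofReal ((1 - θ ^ q⁻¹) ^ (-q)) * (∑' k, ENNReal.ofReal (g k)) *
        ∑' i, ENNReal.ofReal (w i * x i ^ q) := by
  have hK := (one_sub_rpow_inv_rpow_neg_pos hq hθ0.le hθ1).le
  have hwx : ∀ i, 0 ≤ w i * x i ^ q := fun i => by have := hw i; have := hx i; positivity
  calc ∑' n, ENNReal.ofReal (w n * (∑ i ∈ range (n + 1), x i) ^ q)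
      ≤ ∑' n, ENNReal.ofReal ((1 - θ ^ q⁻¹) ^ (-q)) * ∑ i ∈ range (n + 1),
          ENNReal.ofReal (w i * x i ^ q) * ENNReal.ofReal (g (n - i)) := by
        refine ENNReal.tsum_le_tsum fun n => ?_
        refine (ENNReal.ofReal_le_ofReal
          (mul_rpow_sum_range_le hq hθ0 hθ1 hw hx hwg n)).trans_eq ?_
        rw [ENNReal.ofReal_mul hK, ENNReal.ofReal_sum_of_nonneg fun i _ =>
          mul_nonneg (hwx i) (hg _)]
        simp_rw [ENNReal.ofReal_mul (hwx _)]
    _ = _ := by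
        rw [ENNReal.tsum_mul_left, mul_assoc, mul_comm (∑' k, ENNReal.ofReal (g k)),
          ENNReal.tsum_mul_tsum_eq_tsum_sum_range]

end Hardy

noncomputable def hardyWeight (l q b : ℝ) (n : ℕ) : ℝ :=
  2 ^ (-(n : ℝ) * l * q) * (1 + (n : ℝ)) ^ (b * q)

lemma hardyWeight_nonneg (l q b : ℝ) (n : ℕ) : 0 ≤ hardyWeight l q b n := by
  unfold hardyWeight
  positivity

lemma hardyWeight_add_le (l q b : ℝ) (m k : ℕ) :
    hardyWeight l q b (m + k) ≤
      hardyWeight l q b m * ((2 ^ (-(l * q / 2)) : ℝ) ^ k * (1 + (k : ℝ)) ^ |b * q|) *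
        (2 ^ (-(l * q / 2)) : ℝ) ^ k := by
  set θ : ℝ := 2 ^ (-(l * q / 2))
  have hsplit :
      (2 : ℝ) ^ (-((m + k : ℕ) : ℝ) * l * q) = 2 ^ (-(m : ℝ) * l * q) * θ ^ k * θ ^ k := by
    rw [← Real.rpow_natCast, ← Real.rpow_mul zero_le_two, ← Real.rpow_add zero_lt_two,
      ← Real.rpow_add zero_lt_two]
    push_cast
    ring_nf
  unfold hardyWeight
  rw [hsplit]
  calc _ ≤ 2 ^ (-(m : ℝ) * l * q) * θ ^ k * θ ^ k *
        ((1 + (m : ℝ)) ^ (b * q) * (1 + (k : ℝ)) ^ |b * q|) := by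
        gcongr
        exact_mod_cast one_add_add_rpow_le m.cast_nonneg k.cast_nonneg (b * q)
    _ = _ := by ring

/-- Discrete Hardy-type inequality for partial sums with weights `2^{-jλq}(1+j)^{bq}`. -/
theorem hardy_partial_sums (l q b : ℝ) (hl : 0 < l) (hq : 0 < q) :
    ∃ c C : ℝ, 0 < c ∧ 0 < C ∧
      ∀ (j₀ : ℕ) (ξ : ℕ → ℝ), (∀ k, 0 ≤ ξ k) →
        (ENNReal.ofReal c *
            ∑' j : ℕ, ENNReal.ofReal
              ((2 : ℝ) ^ (-(((j₀ + j : ℕ) : ℝ)) * l * q) * (1 + ((j₀ + j : ℕ) : ℝ)) ^ (b * q) *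
                ξ (j₀ + j) ^ q) ≤
          ∑' j : ℕ, ENNReal.ofReal
              ((2 : ℝ) ^ (-(((j₀ + j : ℕ) : ℝ)) * l * q) * (1 + ((j₀ + j : ℕ) : ℝ)) ^ (b * q) *
                (∑ k ∈ Finset.Icc j₀ (j₀ + j), ξ k) ^ q)) ∧
        (∑' j : ℕ, ENNReal.ofReal
              ((2 : ℝ) ^ (-(((j₀ + j : ℕ) : ℝ)) * l * q) * (1 + ((j₀ + j : ℕ) : ℝ)) ^ (b * q) *
                (∑ k ∈ Finset.Icc j₀ (j₀ + j), ξ k) ^ q) ≤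
          ENNReal.ofReal C *
            ∑' j : ℕ, ENNReal.ofReal
              ((2 : ℝ) ^ (-(((j₀ + j : ℕ) : ℝ)) * l * q) * (1 + ((j₀ + j : ℕ) : ℝ)) ^ (b * q) *
                ξ (j₀ + j) ^ q)) := by
  set θ : ℝ := 2 ^ (-(l * q / 2))
  have hθ0 : 0 < θ := by positivity
  have hθ1 : θ < 1 := Real.rpow_lt_one_of_one_lt_of_neg one_lt_two (by linarith [mul_pos hl hq])
  set g : ℕ → ℝ := fun k => θ ^ k * (1 + (k : ℝ)) ^ |b * q|
  have hg : ∀ k, 0 ≤ g k := fun k => by positivity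
  have hg_sum : Summable g := summable_geometric_mul_one_add_rpow hθ0.le hθ1 _
  set K : ℝ := (1 - θ ^ q⁻¹) ^ (-q)
  have hK : 0 < K := one_sub_rpow_inv_rpow_neg_pos hq hθ0.le hθ1
  refine ⟨1, K * ∑' k, g k, one_pos, mul_pos hK (hg_sum.tsum_pos hg 0 (by simp [g])),
    fun j₀ ξ hξ => ⟨?_, ?_⟩⟩
  · rw [ENNReal.ofReal_one, one_mul]
    refine ENNReal.tsum_le_tsum fun j => ENNReal.ofReal_le_ofReal ?_
    gcongr
    · exact hξ _
    · exact single_le_sum (fun k _ => hξ k) (by simp)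
  · simp_rw [sum_Icc_add_eq_sum_range, ENNReal.ofReal_mul hK.le,
      ENNReal.ofReal_tsum_of_nonneg hg hg_sum]
    exact tsum_ofReal_mul_rpow_sum_range_le (w := fun n => hardyWeight l q b (j₀ + n))
      hq hθ0 hθ1 (fun n => hardyWeight_nonneg l q b _) hg (fun i => hξ _)
      fun i k => by simpa only [add_assoc] using hardyWeight_add_le l q b (j₀ + i) k
end

section
/- Let b > 0, 0 < q < ∞ and 0 < r < ∞. There exist constants c, C > 0 depending only on b, q, r such that for every sequence (a_ν)_{ν≥0} of nonnegative reals: c · (Σ_{j=0}^∞ 2^{jbr} (Σ_{ν=2^j−1}^{2^{j+1}−2} a_ν^q)^{r/q})^{1/r} ≤ (Σ_{j=0}^∞ 2^{jbr} (Σ_{ν=2^j−1}^{∞} a_ν^q)^{r/q})^{1/r} ≤ C · (Σ_{j=0}^∞ 2^{jbr} (Σ_{ν=2^j−1}^{2^{j+1}−2} a_ν^q)^{r/q})^{1/r}, where both sides may simultaneously be infinite. -/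
open scoped ENNReal NNReal

/-! The lower bound holds with `c = 1` because each block lies in its tail. For the upper bound,
the tail from `2^j - 1` is the sum of the blocks `k ≥ j`, so it suffices to prove the dual Hardy
inequality `∑ ρ^j (∑_{k ≥ j} u_k)^s ≤ D ∑ ρ^j u_j^s` for `ρ = 2^{br} > 1` and `s = r/q > 0`.
No convexity in `s` is needed: bound the tail by a geometrically weighted supremum,
`∑_k v_k ≤ (∑_k μ^{-k}) sup_k μ^k v_k`, and the `s`-th power of the supremum by the sum of the
`s`-th powers. With `μ^s = ρ^{1/2}`, exchanging the sums leaves the convergent factor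
`∑_k ρ^{-k/2}`. -/

open Filter Finset

namespace ENNReal

theorem tsum_comp_add_eq_tsum_sum_Ico {n : ℕ → ℕ} (hn : Monotone n)
    (hn_lim : Tendsto n atTop atTop) (f : ℕ → ℝ≥0∞) :
    ∑' ν, f (n 0 + ν) = ∑' k, ∑ ν ∈ Ico (n k) (n (k + 1)), f ν := by
  have hpartial : ∀ N, ∑ ν ∈ range (n N - n 0), f (n 0 + ν) =
      ∑ k ∈ range N, ∑ ν ∈ Ico (n k) (n (k + 1)), f ν := by
    intro N
    rw [← sum_Ico_eq_sum_range]
    induction N with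
    | zero => simp
    | succ N ih =>
      rw [sum_range_succ, ← ih, sum_Ico_consecutive _ (hn N.zero_le) (hn N.le_succ)]
  rw [ENNReal.tsum_eq_iSup_nat' ((tendsto_sub_atTop_nat (n 0)).comp hn_lim),
    ENNReal.tsum_eq_iSup_nat]
  exact iSup_congr hpartial

theorem tsum_comp_two_pow_sub_one_add (f : ℕ → ℝ≥0∞) (j : ℕ) :
    ∑' ν, f (2 ^ j - 1 + ν) = ∑' k, ∑ ν ∈ Icc (2 ^ (j + k) - 1) (2 ^ (j + k + 1) - 2), f ν := by
  have hmono : Monotone fun k ↦ 2 ^ (j + k) - 1 := fun k l hkl ↦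
    Nat.sub_le_sub_right (Nat.pow_le_pow_right two_pos (by omega)) 1
  have hlim : Tendsto (fun k ↦ 2 ^ (j + k) - 1) atTop atTop :=
    tendsto_atTop_mono (fun k ↦ Nat.le_sub_one_of_lt <|
      (Nat.lt_two_pow_self (n := k)).trans_le (Nat.pow_le_pow_right two_pos (k.le_add_left j)))
      tendsto_id
  have hblock : ∀ m : ℕ,
      Icc (2 ^ m - 1) (2 ^ (m + 1) - 2) = Ico (2 ^ m - 1) (2 ^ (m + 1) - 1) := by
    intro m
    have : 2 ≤ 2 ^ (m + 1) := le_self_pow (by norm_num) m.succ_ne_zero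
    ext ν
    simp only [mem_Icc, mem_Ico]
    omega
  refine (tsum_comp_add_eq_tsum_sum_Ico hmono hlim f).trans (tsum_congr fun k ↦ ?_)
  rw [hblock, add_assoc]

theorem tsum_le_tsum_inv_pow_mul_iSup {μ : ℝ≥0∞} (hμ : μ ≠ 0) (hμ_top : μ ≠ ∞)
    (v : ℕ → ℝ≥0∞) : ∑' k, v k ≤ (∑' k, μ⁻¹ ^ k) * ⨆ k, μ ^ k * v k := by
  rw [← ENNReal.tsum_mul_right]
  refine ENNReal.tsum_le_tsum fun k ↦ ?_
  calc v k = μ⁻¹ ^ k * (μ ^ k * v k) := by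
        rw [← mul_assoc, ← mul_pow, ENNReal.inv_mul_cancel hμ hμ_top, one_pow, one_mul]
    _ ≤ μ⁻¹ ^ k * ⨆ k, μ ^ k * v k := by gcongr; exact le_iSup (fun k ↦ μ ^ k * v k) k

theorem rpow_iSup_le_tsum_rpow {s : ℝ} (hs : 0 < s) (w : ℕ → ℝ≥0∞) :
    (⨆ k, w k) ^ s ≤ ∑' k, w k ^ s := by
  rw [show (⨆ k, w k) ^ s = ⨆ k, w k ^ s from (orderIsoRpow s hs).map_iSup w]
  exact iSup_le ENNReal.le_tsum

theorem rpow_tsum_le_mul_tsum_pow_mul_rpow {μ : ℝ≥0∞} (hμ : μ ≠ 0) (hμ_top : μ ≠ ∞) {s : ℝ}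
    (hs : 0 < s) (v : ℕ → ℝ≥0∞) :
    (∑' k, v k) ^ s ≤ (∑' k, μ⁻¹ ^ k) ^ s * ∑' k, (μ ^ s) ^ k * v k ^ s := by
  calc (∑' k, v k) ^ s ≤ ((∑' k, μ⁻¹ ^ k) * ⨆ k, μ ^ k * v k) ^ s := by
        gcongr; exact tsum_le_tsum_inv_pow_mul_iSup hμ hμ_top v
    _ ≤ (∑' k, μ⁻¹ ^ k) ^ s * ∑' k, (μ ^ k * v k) ^ s := by
        rw [mul_rpow_of_nonneg _ _ hs.le]; gcongr; exact rpow_iSup_le_tsum_rpow hs _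
    _ = (∑' k, μ⁻¹ ^ k) ^ s * ∑' k, (μ ^ s) ^ k * v k ^ s := by
        have hpow : ∀ k : ℕ, (μ ^ k) ^ s = (μ ^ s) ^ k := fun k ↦ by
          rw [← rpow_natCast_mul, mul_comm, rpow_mul_natCast]
        simp_rw [mul_rpow_of_nonneg _ _ hs.le, hpow]

theorem tsum_inv_pow_ne_top {x : ℝ≥0∞} (hx : 1 < x) : ∑' k, x⁻¹ ^ k ≠ ∞ :=
  (tsum_geometric_lt_top.2 (ENNReal.inv_lt_one.2 hx)).ne

theorem exists_tsum_pow_mul_rpow_tail_le {ρ : ℝ≥0∞} (hρ : 1 < ρ) (hρ_top : ρ ≠ ∞) {s : ℝ}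
    (hs : 0 < s) : ∃ D ≠ ∞, ∀ u : ℕ → ℝ≥0∞,
      ∑' j, ρ ^ j * (∑' k, u (j + k)) ^ s ≤ D * ∑' j, ρ ^ j * u j ^ s := by
  set θ := ρ ^ (2⁻¹ : ℝ)
  have hθ : 1 < θ := one_lt_rpow hρ (by norm_num)
  have hθ_top : θ ≠ ∞ := rpow_ne_top_of_nonneg (by norm_num) hρ_top
  have hθ_sq : θ ^ 2 = ρ := by rw [← rpow_two]; exact rpow_inv_rpow two_ne_zero ρ
  set μ := θ ^ s⁻¹
  have hμ : 1 < μ := one_lt_rpow hθ (inv_pos.2 hs)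
  have hμ_top : μ ≠ ∞ := rpow_ne_top_of_nonneg (inv_pos.2 hs).le hθ_top
  have hμ_rpow : μ ^ s = θ := rpow_inv_rpow hs.ne' θ
  set A := (∑' k, μ⁻¹ ^ k) ^ s
  set B := ∑' k, θ⁻¹ ^ k
  have hweight : ∀ j k : ℕ, ρ ^ j * θ ^ k = θ⁻¹ ^ k * ρ ^ (j + k) := by
    intro j k
    have hρ_pow : ρ ^ k = θ ^ k * θ ^ k := by rw [← hθ_sq, ← pow_mul, ← pow_add, two_mul]
    have hθ_cancel : θ⁻¹ ^ k * θ ^ k = 1 := by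
      rw [← mul_pow, ENNReal.inv_mul_cancel (zero_lt_one.trans hθ).ne' hθ_top, one_pow]
    rw [pow_add, hρ_pow,
      show θ⁻¹ ^ k * (ρ ^ j * (θ ^ k * θ ^ k)) = θ⁻¹ ^ k * θ ^ k * (ρ ^ j * θ ^ k) by ring,
      hθ_cancel, one_mul]
  refine ⟨A * B, mul_ne_top (rpow_ne_top_of_nonneg hs.le (tsum_inv_pow_ne_top hμ))
    (tsum_inv_pow_ne_top hθ), fun u ↦ ?_⟩
  calc ∑' j, ρ ^ j * (∑' k, u (j + k)) ^ s
      ≤ ∑' j, ρ ^ j * (A * ∑' k, θ ^ k * u (j + k) ^ s) := by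
        gcongr with j
        simpa only [hμ_rpow] using
          rpow_tsum_le_mul_tsum_pow_mul_rpow (zero_lt_one.trans hμ).ne' hμ_top hs _
    _ = A * ∑' k, θ⁻¹ ^ k * ∑' j, ρ ^ (j + k) * u (j + k) ^ s := by
        simp_rw [← ENNReal.tsum_mul_left]
        rw [ENNReal.tsum_comm]
        refine tsum_congr fun k ↦ tsum_congr fun j ↦ ?_
        rw [← mul_assoc (θ⁻¹ ^ k), ← hweight]
        ring
    _ ≤ A * ∑' k, θ⁻¹ ^ k * ∑' j, ρ ^ j * u j ^ s := by
        gcongr A * ∑' k, _ * ?_ with k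
        exact tsum_comp_le_tsum_of_injective (add_left_injective k) (fun m ↦ ρ ^ m * u m ^ s)
    _ = A * B * ∑' j, ρ ^ j * u j ^ s := by rw [ENNReal.tsum_mul_right, mul_assoc]

end ENNReal

/-- For `b > 0`, the truncated quasi-norm built from the dyadic blocks
`I_j = {2^j-1, …, 2^{j+1}-2}` is equivalent to the one built from the full tails
`{ν ≥ 2^j - 1}`; both sides may simultaneously be infinite. -/
theorem truncated_blocks_eq_tails (b q r : ℝ) (hb : 0 < b) (hq : 0 < q) (hr : 0 < r) :
    ∃ c C : ℝ, 0 < c ∧ 0 < C ∧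
      ∀ a : ℕ → ℝ≥0,
        (ENNReal.ofReal c *
            (∑' j : ℕ, ENNReal.ofReal ((2 : ℝ) ^ ((j : ℝ) * b * r)) *
              (∑ ν ∈ Finset.Icc (2 ^ j - 1) (2 ^ (j + 1) - 2), (a ν : ℝ≥0∞) ^ q)
                ^ (r / q)) ^ (1 / r) ≤
          (∑' j : ℕ, ENNReal.ofReal ((2 : ℝ) ^ ((j : ℝ) * b * r)) *
              (∑' ν : ℕ, (a (2 ^ j - 1 + ν) : ℝ≥0∞) ^ q) ^ (r / q)) ^ (1 / r)) ∧
        ((∑' j : ℕ, ENNReal.ofReal ((2 : ℝ) ^ ((j : ℝ) * b * r)) *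
              (∑' ν : ℕ, (a (2 ^ j - 1 + ν) : ℝ≥0∞) ^ q) ^ (r / q)) ^ (1 / r) ≤
          ENNReal.ofReal C *
            (∑' j : ℕ, ENNReal.ofReal ((2 : ℝ) ^ ((j : ℝ) * b * r)) *
              (∑ ν ∈ Finset.Icc (2 ^ j - 1) (2 ^ (j + 1) - 2), (a ν : ℝ≥0∞) ^ q)
                ^ (r / q)) ^ (1 / r)) := by
  set ρ := ENNReal.ofReal (2 ^ (b * r))
  have hweight : ∀ j : ℕ, ENNReal.ofReal ((2 : ℝ) ^ ((j : ℝ) * b * r)) = ρ ^ j := fun j ↦ by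
    rw [← ENNReal.ofReal_pow (by positivity), ← Real.rpow_mul_natCast zero_le_two]
    ring_nf
  have hρ : 1 < ρ := ENNReal.one_lt_ofReal.2 (Real.one_lt_rpow one_lt_two (by positivity))
  obtain ⟨D, hD, hardy⟩ :=
    ENNReal.exists_tsum_pow_mul_rpow_tail_le hρ ENNReal.ofReal_ne_top (div_pos hr hq)
  refine ⟨1, (D.toReal + 1) ^ (1 / r), one_pos, by positivity, fun a ↦ ?_⟩
  set u : ℕ → ℝ≥0∞ := fun m ↦ ∑ ν ∈ Finset.Icc (2 ^ m - 1) (2 ^ (m + 1) - 2), (a ν : ℝ≥0∞) ^ q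
  have htail : ∀ j : ℕ, ∑' ν, (a (2 ^ j - 1 + ν) : ℝ≥0∞) ^ q = ∑' k, u (j + k) :=
    ENNReal.tsum_comp_two_pow_sub_one_add (fun ν ↦ (a ν : ℝ≥0∞) ^ q)
  simp only [hweight, htail]
  constructor
  · rw [ENNReal.ofReal_one, one_mul]
    gcongr with j
    exact ENNReal.le_tsum (f := fun k ↦ u (j + k)) 0
  · have hD_le : D ≤ ENNReal.ofReal (D.toReal + 1) :=
      (ENNReal.ofReal_toReal hD).symm.le.trans (ENNReal.ofReal_le_ofReal (by linarith))
    rw [← ENNReal.ofReal_rpow_of_pos (by positivity),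
      ← ENNReal.mul_rpow_of_nonneg _ _ (by positivity)]
    gcongr
    exact (hardy u).trans (by gcongr)
end

section
/- Let 0 < q_1 < q_0 < ∞, 0 < r_0, r_1 < ∞ and b_0, b_1 ∈ ℝ with b_0 + 1/q_0 > b_1 + 1/q_1. Then there exists a constant C > 0 such that for every sequence (a_ν)_{ν≥0} of nonnegative reals: (Σ_{k=0}^∞ 2^{k b_1 r_1} (Σ_{ν ∈ I_k} a_ν^{q_1})^{r_1/q_1})^{1/r_1} ≤ C (Σ_{k=0}^∞ 2^{k b_0 r_0} (Σ_{ν ∈ I_k} a_ν^{q_0})^{r_0/q_0})^{1/r_0}, where I_k = {2^k − 1, ..., 2^{k+1} − 2}. -/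
open scoped ENNReal NNReal
open Finset

/-! On each dyadic block `I_k`, of cardinality `2^k`, Hölder's inequality bounds the `ℓ^{q₁}`-norm
by `2^{k(1/q₁ - 1/q₀)}` times the `ℓ^{q₀}`-norm. After the weights are absorbed, the `k`-th term of
the `(b₁, q₁)`-sequence is at most `2^{-εk}` times the `k`-th term of the `(b₀, q₀)`-sequence, with
`ε = b₀ + 1/q₀ - (b₁ + 1/q₁) > 0`. Each term of the latter is bounded by its `ℓ^{r₀}`-norm, so the
`ℓ^{r₁}`-norm of the former is controlled by a geometric series. -/

namespace ENNReal

theorem rpow_sum_rpow_le_card_rpow_mul_rpow_sum_rpow {ι : Type*} (s : Finset ι) (f : ι → ℝ≥0∞)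
    {p q : ℝ} (hp : 0 < p) (hpq : p ≤ q) :
    (∑ i ∈ s, f i ^ p) ^ (1 / p) ≤
      (#s : ℝ≥0∞) ^ (1 / p - 1 / q) * (∑ i ∈ s, f i ^ q) ^ (1 / q) := by
  have hq : 0 < q := hp.trans_le hpq
  have hqp : 1 ≤ q / p := (one_le_div hp).2 hpq
  have power_mean := rpow_sum_le_const_mul_sum_rpow s (fun i => f i ^ p) hqp
  simp only [← rpow_mul, mul_div_cancel₀ q hp.ne'] at power_mean
  calc (∑ i ∈ s, f i ^ p) ^ (1 / p)
      = ((∑ i ∈ s, f i ^ p) ^ (q / p)) ^ (1 / q) := by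
        rw [← rpow_mul]; congr 1; field_simp
    _ ≤ ((#s : ℝ≥0∞) ^ (q / p - 1) * ∑ i ∈ s, f i ^ q) ^ (1 / q) := by gcongr
    _ = (#s : ℝ≥0∞) ^ (1 / p - 1 / q) * (∑ i ∈ s, f i ^ q) ^ (1 / q) := by
        rw [mul_rpow_of_nonneg _ _ (by positivity), ← rpow_mul]; congr 2; field_simp

theorem le_rpow_tsum_rpow {β : Type*} {p : ℝ} (hp : 0 < p) (y : β → ℝ≥0∞) (k : β) :
    y k ≤ (∑' j, y j ^ p) ^ (1 / p) := by
  calc y k = (y k ^ p) ^ (1 / p) := by rw [← rpow_mul, mul_one_div_cancel hp.ne', rpow_one]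
    _ ≤ (∑' j, y j ^ p) ^ (1 / p) := by gcongr; exact ENNReal.le_tsum k

theorem rpow_tsum_rpow_le_of_le_geometric {c : ℝ≥0∞} {r₀ r₁ : ℝ} (hr₀ : 0 < r₀) (hr₁ : 0 < r₁)
    {x y : ℕ → ℝ≥0∞} (h : ∀ k, x k ≤ c ^ k * y k) :
    (∑' k, x k ^ r₁) ^ (1 / r₁) ≤
      (1 - c ^ r₁)⁻¹ ^ (1 / r₁) * (∑' k, y k ^ r₀) ^ (1 / r₀) := by
  set N := (∑' k, y k ^ r₀) ^ (1 / r₀)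
  have hterm : ∀ k, x k ^ r₁ ≤ (c ^ r₁) ^ k * N ^ r₁ := fun k => by
    calc x k ^ r₁ ≤ (c ^ k * N) ^ r₁ := by
          gcongr; exact (h k).trans (by gcongr; exact le_rpow_tsum_rpow hr₀ y k)
      _ = (c ^ r₁) ^ k * N ^ r₁ := by
          rw [mul_rpow_of_nonneg _ _ hr₁.le, ← rpow_natCast, ← rpow_natCast (c ^ r₁), ← rpow_mul c,
            ← rpow_mul c, mul_comm (k : ℝ)]
  calc (∑' k, x k ^ r₁) ^ (1 / r₁)
      ≤ (∑' k, (c ^ r₁) ^ k * N ^ r₁) ^ (1 / r₁) := by gcongr with k; exact hterm k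
    _ = (1 - c ^ r₁)⁻¹ ^ (1 / r₁) * N := by
        rw [ENNReal.tsum_mul_right, tsum_geometric, mul_rpow_of_nonneg _ _ (by positivity), ← rpow_mul,
          mul_one_div_cancel hr₁.ne', rpow_one]

end ENNReal

def dyadicBlock (k : ℕ) : Finset ℕ := Icc (2 ^ k - 1) (2 ^ (k + 1) - 2)

theorem card_dyadicBlock (k : ℕ) : #(dyadicBlock k) = 2 ^ k := by
  rw [dyadicBlock, Nat.card_Icc, pow_succ]
  have := Nat.one_le_two_pow (n := k)
  omega

theorem two_rpow_mul_rpow_sum_dyadicBlock_le (a : ℕ → ℝ≥0∞) (k : ℕ) {q₀ q₁ : ℝ} (b₀ b₁ : ℝ)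
    (hq₁ : 0 < q₁) (hq : q₁ ≤ q₀) :
    2 ^ (k * b₁) * (∑ ν ∈ dyadicBlock k, a ν ^ q₁) ^ (1 / q₁) ≤
      (2 ^ (-(b₀ + 1 / q₀ - (b₁ + 1 / q₁)))) ^ k *
        (2 ^ (k * b₀) * (∑ ν ∈ dyadicBlock k, a ν ^ q₀) ^ (1 / q₀)) := by
  have holder := ENNReal.rpow_sum_rpow_le_card_rpow_mul_rpow_sum_rpow (dyadicBlock k) a hq₁ hq
  rw [card_dyadicBlock, Nat.cast_pow, Nat.cast_ofNat, ← ENNReal.rpow_natCast,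
    ← ENNReal.rpow_mul] at holder
  calc 2 ^ (k * b₁) * (∑ ν ∈ dyadicBlock k, a ν ^ q₁) ^ (1 / q₁)
      ≤ 2 ^ (k * b₁) * (2 ^ (k * (1 / q₁ - 1 / q₀)) *
          (∑ ν ∈ dyadicBlock k, a ν ^ q₀) ^ (1 / q₀)) := by gcongr
    _ = _ := by
        rw [← ENNReal.rpow_natCast, ← ENNReal.rpow_mul, ← mul_assoc, ← mul_assoc,
          ← ENNReal.rpow_add _ _ two_ne_zero ENNReal.ofNat_ne_top,
          ← ENNReal.rpow_add _ _ two_ne_zero ENNReal.ofNat_ne_top]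
        ring_nf

theorem ofReal_two_rpow_mul_rpow_div (u b r q : ℝ) (hr : 0 ≤ r) (S : ℝ≥0∞) :
    ENNReal.ofReal ((2 : ℝ) ^ (u * b * r)) * S ^ (r / q) = (2 ^ (u * b) * S ^ (1 / q)) ^ r := by
  rw [ENNReal.mul_rpow_of_nonneg _ _ hr, ← ENNReal.rpow_mul, ← ENNReal.rpow_mul, one_div_mul_eq_div,
    ← ENNReal.ofReal_rpow_of_pos two_pos, ENNReal.ofReal_ofNat]

/-- Sufficiency part of the embedding between truncated sequence spaces with equal
smoothness: if `q₁ < q₀` and `b₀ + 1/q₀ > b₁ + 1/q₁`, then the `(b₁, r₁, q₁)`-quasi-norm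
is dominated by the `(b₀, r₀, q₀)`-quasi-norm, over the dyadic blocks
`I_k = {2^k-1, …, 2^{k+1}-2}`. -/
theorem truncated_embedding_sufficiency (q₀ q₁ r₀ r₁ b₀ b₁ : ℝ)
    (hq₁ : 0 < q₁) (hq : q₁ < q₀) (hr₀ : 0 < r₀) (hr₁ : 0 < r₁)
    (hb : b₁ + 1 / q₁ < b₀ + 1 / q₀) :
    ∃ C : ℝ, 0 < C ∧
      ∀ a : ℕ → ℝ≥0,
        (∑' k : ℕ, ENNReal.ofReal ((2 : ℝ) ^ ((k : ℝ) * b₁ * r₁)) *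
            (∑ ν ∈ Finset.Icc (2 ^ k - 1 : ℕ) (2 ^ (k + 1) - 2), (a ν : ℝ≥0∞) ^ q₁)
              ^ (r₁ / q₁)) ^ (1 / r₁) ≤
          ENNReal.ofReal C *
            (∑' k : ℕ, ENNReal.ofReal ((2 : ℝ) ^ ((k : ℝ) * b₀ * r₀)) *
              (∑ ν ∈ Finset.Icc (2 ^ k - 1 : ℕ) (2 ^ (k + 1) - 2), (a ν : ℝ≥0∞) ^ q₀)
                ^ (r₀ / q₀)) ^ (1 / r₀) := by
  set c : ℝ≥0∞ := 2 ^ (-(b₀ + 1 / q₀ - (b₁ + 1 / q₁)))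
  have hc : c ^ r₁ < 1 := by
    refine ENNReal.rpow_lt_one (ENNReal.rpow_lt_one_of_one_lt_of_neg (by norm_num) ?_) hr₁
    linarith
  have hgap : 1 - c ^ r₁ ≠ 0 := (tsub_pos_iff_lt.2 hc).ne'
  set C : ℝ≥0∞ := (1 - c ^ r₁)⁻¹ ^ (1 / r₁)
  have hC_top : C ≠ ⊤ :=
    ENNReal.rpow_ne_top_of_nonneg (by positivity) (ENNReal.inv_ne_top.2 hgap)
  have hC_zero : C ≠ 0 :=
    (ENNReal.rpow_pos (ENNReal.inv_pos.2 (ENNReal.sub_ne_top ENNReal.one_ne_top))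
      (ENNReal.inv_ne_top.2 hgap)).ne'
  refine ⟨C.toReal, ENNReal.toReal_pos hC_zero hC_top, fun a => ?_⟩
  simp only [ofReal_two_rpow_mul_rpow_div _ _ _ _ hr₁.le, ofReal_two_rpow_mul_rpow_div _ _ _ _ hr₀.le,
    ENNReal.ofReal_toReal hC_top]
  exact ENNReal.rpow_tsum_rpow_le_of_le_geometric hr₀ hr₁ fun k =>
    two_rpow_mul_rpow_sum_dyadicBlock_le (fun ν => a ν) k b₀ b₁ hq₁ hq.le
end

section
/- Let 0 < q_0, q_1 < ∞, 0 < r_0, r_1 < ∞ and b_0, b_1 ∈ ℝ. Suppose there exists a constant C > 0 such that for every sequence (a_ν)_{ν≥0} of nonnegative reals: (Σ_{k=0}^∞ 2^{k b_1 r_1} (Σ_{ν ∈ I_k} a_ν^{q_1})^{r_1/q_1})^{1/r_1} ≤ C (Σ_{k=0}^∞ 2^{k b_0 r_0} (Σ_{ν ∈ I_k} a_ν^{q_0})^{r_0/q_0})^{1/r_0}, where I_k = {2^k − 1, ..., 2^{k+1} − 2}. Then b_1 + 1/q_1 ≤ b_0 + 1/q_0. -/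
/-!
Test the inequality on the indicator of a single dyadic block `I_N`, which has `2^N` elements.
Only the `N`-th summand survives on either side, so the inequality reads
`2^{N(b₁ + 1/q₁)} ≤ C 2^{N(b₀ + 1/q₀)}` for every `N`, which is impossible if
`b₁ + 1/q₁ > b₀ + 1/q₀`.
-/

open scoped ENNReal NNReal

open Finset

theorem mem_dyadicBlock_iff {k ν : ℕ} : ν ∈ dyadicBlock k ↔ Nat.log 2 (ν + 1) = k := by
  rw [dyadicBlock, mem_Icc, Nat.log_eq_iff (Or.inr ⟨one_lt_two, ν.succ_ne_zero⟩), pow_succ]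
  have := k.one_le_two_pow
  omega

theorem disjoint_dyadicBlock {k N : ℕ} (h : k ≠ N) : Disjoint (dyadicBlock k) (dyadicBlock N) :=
  disjoint_left.2 fun _ hk hN =>
    h <| (mem_dyadicBlock_iff.1 hk).symm.trans (mem_dyadicBlock_iff.1 hN)

noncomputable def blockQuasiNorm (b r q : ℝ) (a : ℕ → ℝ≥0) : ℝ≥0∞ :=
  (∑' k : ℕ, ENNReal.ofReal ((2 : ℝ) ^ ((k : ℝ) * b * r)) *
    (∑ ν ∈ dyadicBlock k, (a ν : ℝ≥0∞) ^ q) ^ (r / q)) ^ (1 / r)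

theorem sum_dyadicBlock_indicator_rpow {q : ℝ} (hq : 0 < q) (k N : ℕ) :
    ∑ ν ∈ dyadicBlock k, (((dyadicBlock N : Set ℕ).indicator 1 ν : ℝ≥0) : ℝ≥0∞) ^ q =
      if k = N then 2 ^ N else 0 := by
  split_ifs with hkN
  · subst hkN
    rw [sum_congr rfl fun ν hν => by rw [Set.indicator_of_mem (mem_coe.2 hν)]]
    simp [card_dyadicBlock]
  · refine sum_eq_zero fun ν hν => ?_
    rw [Set.indicator_of_notMem (disjoint_left.1 (disjoint_dyadicBlock hkN) hν)]
    simp [ENNReal.zero_rpow_of_pos hq]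

theorem blockQuasiNorm_indicator_dyadicBlock {b r q : ℝ} (hq : 0 < q) (hr : 0 < r) (N : ℕ) :
    blockQuasiNorm b r q ((dyadicBlock N : Set ℕ).indicator 1) =
      ENNReal.ofReal ((2 : ℝ) ^ ((N : ℝ) * (b + 1 / q))) := by
  have hsingle : ∀ k ≠ N, ENNReal.ofReal ((2 : ℝ) ^ ((k : ℝ) * b * r)) *
      (∑ ν ∈ dyadicBlock k, (((dyadicBlock N : Set ℕ).indicator 1 ν : ℝ≥0) : ℝ≥0∞) ^ q) ^ (r / q)
      = 0 := fun k hk => by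
    rw [sum_dyadicBlock_indicator_rpow hq, if_neg hk, ENNReal.zero_rpow_of_pos (by positivity),
      mul_zero]
  have hcard : (2 : ℝ≥0∞) ^ N = ENNReal.ofReal ((2 : ℝ) ^ (N : ℝ)) := by
    rw [Real.rpow_natCast, ENNReal.ofReal_pow zero_le_two, ENNReal.ofReal_ofNat]
  rw [blockQuasiNorm, tsum_eq_single N hsingle, sum_dyadicBlock_indicator_rpow hq, if_pos rfl,
    hcard, ENNReal.ofReal_rpow_of_pos (by positivity), ← ENNReal.ofReal_mul (by positivity),
    ENNReal.ofReal_rpow_of_pos (by positivity), ← Real.rpow_mul zero_le_two,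
    ← Real.rpow_add two_pos, ← Real.rpow_mul zero_le_two]
  congr 2
  field_simp

theorem le_of_forall_rpow_le_mul_rpow {x s t C : ℝ} (hx : 1 < x)
    (h : ∀ n : ℕ, x ^ ((n : ℝ) * s) ≤ C * x ^ ((n : ℝ) * t)) : s ≤ t := by
  by_contra! hts
  obtain ⟨n, hn⟩ := pow_unbounded_of_one_lt C (Real.one_lt_rpow hx (sub_pos.2 hts))
  have hsplit : x ^ ((n : ℝ) * s) = (x ^ (s - t)) ^ n * x ^ ((n : ℝ) * t) := by
    rw [← Real.rpow_natCast, ← Real.rpow_mul (by positivity), ← Real.rpow_add (by positivity)]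
    ring_nf
  have hn' := h n
  rw [hsplit] at hn'
  exact hn.not_ge (le_of_mul_le_mul_right hn' (by positivity))

theorem truncated_embedding_necessity_general (q₀ q₁ r₀ r₁ b₀ b₁ : ℝ)
    (hq₀ : 0 < q₀) (hq₁ : 0 < q₁) (hr₀ : 0 < r₀) (hr₁ : 0 < r₁)
    (C : ℝ)
    (h : ∀ a : ℕ → ℝ≥0,
        (∑' k : ℕ, ENNReal.ofReal ((2 : ℝ) ^ ((k : ℝ) * b₁ * r₁)) *
            (∑ ν ∈ Finset.Icc (2 ^ k - 1 : ℕ) (2 ^ (k + 1) - 2), (a ν : ℝ≥0∞) ^ q₁)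
              ^ (r₁ / q₁)) ^ (1 / r₁) ≤
          ENNReal.ofReal C *
            (∑' k : ℕ, ENNReal.ofReal ((2 : ℝ) ^ ((k : ℝ) * b₀ * r₀)) *
              (∑ ν ∈ Finset.Icc (2 ^ k - 1 : ℕ) (2 ^ (k + 1) - 2), (a ν : ℝ≥0∞) ^ q₀)
                ^ (r₀ / q₀)) ^ (1 / r₀)) :
    b₁ + 1 / q₁ ≤ b₀ + 1 / q₀ := by
  refine le_of_forall_rpow_le_mul_rpow (C := C) one_lt_two fun N => ?_
  have hN : blockQuasiNorm b₁ r₁ q₁ ((dyadicBlock N : Set ℕ).indicator 1) ≤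
      ENNReal.ofReal C * blockQuasiNorm b₀ r₀ q₀ ((dyadicBlock N : Set ℕ).indicator 1) := h _
  rw [blockQuasiNorm_indicator_dyadicBlock hq₁ hr₁, blockQuasiNorm_indicator_dyadicBlock hq₀ hr₀,
    ← ENNReal.ofReal_mul' (by positivity)] at hN
  exact (ENNReal.ofReal_le_ofReal_iff'.1 hN).resolve_right (by positivity : (0 : ℝ) < _).not_ge

/-- Necessity part of the embedding between truncated sequence spaces: if the
`(b₁, r₁, q₁)`-quasi-norm is dominated by the `(b₀, r₀, q₀)`-quasi-norm over the
dyadic blocks `I_k = {2^k-1, …, 2^{k+1}-2}` for all nonnegative sequences, then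
`b₁ + 1/q₁ ≤ b₀ + 1/q₀`. -/
theorem truncated_embedding_necessity (q₀ q₁ r₀ r₁ b₀ b₁ : ℝ)
    (hq₀ : 0 < q₀) (hq₁ : 0 < q₁) (hr₀ : 0 < r₀) (hr₁ : 0 < r₁)
    (C : ℝ) (hC : 0 < C)
    (h : ∀ a : ℕ → ℝ≥0,
        (∑' k : ℕ, ENNReal.ofReal ((2 : ℝ) ^ ((k : ℝ) * b₁ * r₁)) *
            (∑ ν ∈ Finset.Icc (2 ^ k - 1 : ℕ) (2 ^ (k + 1) - 2), (a ν : ℝ≥0∞) ^ q₁)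
              ^ (r₁ / q₁)) ^ (1 / r₁) ≤
          ENNReal.ofReal C *
            (∑' k : ℕ, ENNReal.ofReal ((2 : ℝ) ^ ((k : ℝ) * b₀ * r₀)) *
              (∑ ν ∈ Finset.Icc (2 ^ k - 1 : ℕ) (2 ^ (k + 1) - 2), (a ν : ℝ≥0∞) ^ q₀)
                ^ (r₀ / q₀)) ^ (1 / r₀)) :
    b₁ + 1 / q₁ ≤ b₀ + 1 / q₀ :=
  truncated_embedding_necessity_general q₀ q₁ r₀ r₁ b₀ b₁ hq₀ hq₁ hr₀ hr₁ C h
end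

section
/- Let (d_n)_{n≥1} be a sequence of complex numbers with d_n → 0 as n → ∞, and suppose Σ_{k=n}^{2n−1} |d_k − d_{k+1}| ≤ C |d_n| for every n ≥ 1 and some constant C ≥ 0. Then there exists a constant C′ (depending only on C) such that |d_n| ≤ C′ Σ_{k ≥ ⌈n/2⌉} |d_k| / k for every n ≥ 1. -/
/-!
Telescoping over `[k, n)` and enlarging to the block `[k, 2k - 1]` turns the GM condition at
`k` into `|d_n| ≤ (1 + C) |d_k|` for every `k ≤ n ≤ 2k`. The indices `⌈n/2⌉ ≤ k ≤ n` are at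
least `n/2` in number and carry weights `1/k ≥ 1/n`, so averaging these comparisons gives
the bound with `C' = 2 (1 + C)`.
-/

open Finset

theorem norm_le_one_add_mul_of_sum_Icc_norm_sub_le {E : Type*} [SeminormedAddCommGroup E]
    {d : ℕ → E} {C : ℝ} {k n : ℕ}
    (hGM : ∑ i ∈ Icc k (2 * k - 1), ‖d i - d (i + 1)‖ ≤ C * ‖d k‖) (hkn : k ≤ n)
    (hn : n ≤ 2 * k) : ‖d n‖ ≤ (1 + C) * ‖d k‖ := by
  have htele : ‖d n - d k‖ ≤ ∑ i ∈ Ico k n, ‖d i - d (i + 1)‖ := by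
    rw [norm_sub_rev]; simpa only [dist_eq_norm] using dist_le_Ico_sum_dist d hkn
  have hblock :
      ∑ i ∈ Ico k n, ‖d i - d (i + 1)‖ ≤ ∑ i ∈ Icc k (2 * k - 1), ‖d i - d (i + 1)‖ :=
    sum_le_sum_of_subset_of_nonneg (fun i hi => by simp only [mem_Ico, mem_Icc] at hi ⊢; omega)
      fun _ _ _ => norm_nonneg _
  calc ‖d n‖ ≤ ‖d k‖ + ‖d n - d k‖ := norm_le_norm_add_norm_sub' (d n) (d k)
    _ ≤ ‖d k‖ + C * ‖d k‖ := by linarith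
    _ = (1 + C) * ‖d k‖ := by ring

theorem le_two_mul_mul_sum_Ico_div {a : ℕ → ℝ} {x M : ℝ} {m n : ℕ} (hx : 0 ≤ x)
    (hm : 0 < m) (hmn : 2 * m ≤ n + 1) (h : ∀ k ∈ Ico m (n + 1), x ≤ M * a k) :
    x ≤ 2 * M * ∑ k ∈ Ico m (n + 1), a k / k := by
  have hn₀ : (0 : ℝ) < n := by exact_mod_cast (by omega : 0 < n)
  have hterm : ∀ k ∈ Ico m (n + 1), x / n ≤ M * (a k / k) := by
    intro k hk
    obtain ⟨hmk, hkn⟩ := mem_Ico.mp hk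
    have hk₀ : (0 : ℝ) < k := by exact_mod_cast hm.trans_le hmk
    calc x / n ≤ x / k :=
          div_le_div_of_nonneg_left hx hk₀ (by exact_mod_cast Nat.lt_succ_iff.mp hkn)
      _ ≤ M * a k / k := div_le_div_of_nonneg_right (h k hk) hk₀.le
      _ = M * (a k / k) := mul_div_assoc _ _ _
  have hcard : (n : ℝ) ≤ 2 * (#(Ico m (n + 1)) : ℝ) := by
    have : n ≤ 2 * (n + 1 - m) := by omega
    rw [Nat.card_Ico]; exact_mod_cast this
  have hsum := sum_le_sum hterm
  rw [sum_const, nsmul_eq_mul, ← mul_sum] at hsum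
  calc x = x / n * n := (div_mul_cancel₀ x hn₀.ne').symm
    _ ≤ x / n * (2 * #(Ico m (n + 1))) := by gcongr
    _ = 2 * (#(Ico m (n + 1)) * (x / n)) := by ring
    _ ≤ 2 * (M * ∑ k ∈ Ico m (n + 1), a k / k) := by gcongr
    _ = 2 * M * ∑ k ∈ Ico m (n + 1), a k / k := by ring

/-- The tail sum lives in `ℝ≥0∞`, so no summability is presupposed; `(n + 1) / 2 = ⌈n/2⌉`. -/
theorem gm_tail_bound (C : ℝ) (hC : 0 ≤ C) :
    ∃ C' : ℝ, 0 < C' ∧ ∀ d : ℕ → ℂ,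
      Filter.Tendsto d Filter.atTop (nhds 0) →
      (∀ n : ℕ, 1 ≤ n →
        ∑ k ∈ Finset.Icc n (2 * n - 1), ‖d k - d (k + 1)‖ ≤
          C * ‖d n‖) →
      ∀ n : ℕ, 1 ≤ n →
        ENNReal.ofReal (‖d n‖) ≤
          ENNReal.ofReal C' *
            ∑' j : ℕ, ENNReal.ofReal
              (‖d ((n + 1) / 2 + j)‖ / (((n + 1) / 2 + j : ℕ) : ℝ)) := by
  refine ⟨2 * (1 + C), by positivity, fun d _ hGM n hn => ?_⟩
  set m := (n + 1) / 2
  have hcompare : ∀ k ∈ Ico m (n + 1), ‖d n‖ ≤ (1 + C) * ‖d k‖ := fun k hk => by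
    obtain ⟨hmk, hkn⟩ := mem_Ico.mp hk
    exact norm_le_one_add_mul_of_sum_Icc_norm_sub_le (hGM k (by omega)) (by omega) (by omega)
  have hreal := le_two_mul_mul_sum_Ico_div (norm_nonneg _) (by omega) (by omega) hcompare
  calc ENNReal.ofReal ‖d n‖
      ≤ ENNReal.ofReal (2 * (1 + C) * ∑ k ∈ Ico m (n + 1), ‖d k‖ / k) :=
        ENNReal.ofReal_le_ofReal hreal
    _ = ENNReal.ofReal (2 * (1 + C)) * ∑ k ∈ Ico m (n + 1), ENNReal.ofReal (‖d k‖ / k) := by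
        rw [ENNReal.ofReal_mul (by positivity),
          ENNReal.ofReal_sum_of_nonneg fun _ _ => by positivity]
    _ ≤ _ := by
        rw [sum_Ico_eq_sum_range]
        gcongr
        exact ENNReal.sum_le_tsum _
end

section
/- Let (X, μ) be a measure space, let (A_0, A_1) be a compatible couple of Banach spaces (both continuously embedded in a Hausdorff topological vector space), and let 1 ≤ p < ∞. For a simple function f : X → A_0 ∩ A_1 (a finite sum Σ_i a_i 1_{E_i} with a_i ∈ A_0 ∩ A_1 and the E_i pairwise disjoint of finite measure) and t > 0, let K(t, f; L_p(A_0), L_p(A_1)) denote the K-functional of the couple (L_p(X; A_0), L_p(X; A_1)), and K(t, f(x); A_0, A_1) the pointwise K-functional. Then there exist constants c, C > 0 depending only on p such that c (∫_X K(t, f(x); A_0, A_1)^p dμ(x))^{1/p} ≤ K(t, f; L_p(A_0), L_p(A_1)) ≤ C (∫_X K(t, f(x); A_0, A_1)^p dμ(x))^{1/p} for all t > 0. -/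
/-!
For the lower bound (`c = 1`), any admissible decomposition `f = g + h` satisfies
`K(t, f(x)) ≤ ‖g(x)‖ + t ‖h(x)‖` pointwise, and Minkowski's inequality finishes.
For the upper bound (`C = 2`), `f` takes only the finitely many values `a_i`: choosing for each
`a_i` a decomposition within `δ` of `K(t, a_i)` gives simple, hence measurable, `g` and `h` with
`‖g(x)‖ + t ‖h(x)‖ ≤ K(t, f(x)) + δ` on `⋃ E_i` and `= 0` off it. So `‖g‖_p` and `t ‖h‖_p` are
each at most `‖K(t, f)‖_p + δ μ(⋃ E_i)^{1/p}`, and `δ → 0` since the `E_i` have finite measure.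
-/

open scoped ENNReal
open MeasureTheory

/-- The simple function `x ↦ Σ_i a_i 1_{E_i}(x)`. -/
noncomputable def simpleFn {X A : Type*} [AddCommMonoid A] (n : ℕ)
    (S : Fin n → Set X) (a : Fin n → A) : X → A :=
  fun x => ∑ i, (S i).indicator (fun _ => a i) x

open Function

section SimpleFn

variable {X A B : Type*} {n : ℕ} {S : Fin n → Set X}

theorem simpleFn_apply_of_mem [AddCommMonoid A] (hS : Pairwise (Disjoint on S))
    (a : Fin n → A) {i : Fin n} {x : X} (hx : x ∈ S i) : simpleFn n S a x = a i := by
  rw [simpleFn, Finset.sum_eq_single i]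
  · exact Set.indicator_of_mem hx _
  · exact fun j _ hji => Set.indicator_of_notMem (fun hxj => (hS hji).ne_of_mem hxj hx rfl) _
  · simp

theorem simpleFn_apply_of_notMem [AddCommMonoid A] (a : Fin n → A) {x : X}
    (hx : x ∉ ⋃ i, S i) : simpleFn n S a x = 0 :=
  Finset.sum_eq_zero fun i _ =>
    Set.indicator_of_notMem (fun hxi => hx (Set.mem_iUnion_of_mem i hxi)) _

theorem comp_simpleFn [AddCommMonoid A] [AddCommMonoid B] (hS : Pairwise (Disjoint on S))
    (φ : A → B) (hφ : φ 0 = 0) (a : Fin n → A) : φ ∘ simpleFn n S a = simpleFn n S (φ ∘ a) := by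
  ext x
  by_cases hx : x ∈ ⋃ i, S i
  · obtain ⟨i, hi⟩ := Set.mem_iUnion.1 hx
    simp [simpleFn_apply_of_mem hS _ hi]
  · simp [simpleFn_apply_of_notMem _ hx, hφ]

theorem stronglyMeasurable_simpleFn [MeasurableSpace X] [AddCommMonoid A] [TopologicalSpace A]
    [ContinuousAdd A] (hS : ∀ i, MeasurableSet (S i)) (a : Fin n → A) :
    StronglyMeasurable (simpleFn n S a) :=
  Finset.stronglyMeasurable_fun_sum _ fun i _ => stronglyMeasurable_const.indicator (hS i)

end SimpleFn

theorem ENNReal.le_of_forall_pos_le_add_mul {a b c : ℝ≥0∞} (hc : c ≠ ⊤)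
    (h : ∀ δ : ℝ≥0∞, 0 < δ → a ≤ b + c * δ) : a ≤ b :=
  ENNReal.le_of_forall_pos_le_add fun ε hε _ =>
    (h _ (ENNReal.div_pos (by simpa using hε.ne') hc)).trans (add_le_add_right ENNReal.mul_div_le _)

section LpENNReal

variable {X ε : Type*} [MeasurableSpace X] {μ : Measure X} {q : ℝ}

theorem eLpNorm'_const_mul {f : X → ℝ≥0∞} {c : ℝ≥0∞} (hc : c ≠ ⊤) (hq : 0 < q) :
    eLpNorm' (fun x => c * f x) q μ = c * eLpNorm' f q μ := by
  simp only [eLpNorm'_eq_lintegral_enorm, enorm_eq_self, ENNReal.mul_rpow_of_nonneg _ _ hq.le]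
  rw [lintegral_const_mul' _ _ (ENNReal.rpow_ne_top_of_nonneg hq.le hc),
    ENNReal.mul_rpow_of_nonneg _ _ (by positivity), ← ENNReal.rpow_mul, mul_one_div_cancel hq.ne',
    ENNReal.rpow_one]

theorem eLpNorm'_indicator_const [TopologicalSpace ε] [ESeminormedAddMonoid ε] {s : Set X}
    (hs : MeasurableSet s) (hq : 0 < q) (c : ε) :
    eLpNorm' (s.indicator fun _ => c) q μ = ‖c‖ₑ * μ s ^ (1 / q) := by
  have h := eLpNorm_indicator_const (μ := μ) (c := c) hs (ENNReal.ofReal_pos.2 hq).ne'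
    ENNReal.ofReal_ne_top
  rwa [eLpNorm_eq_eLpNorm' (ENNReal.ofReal_pos.2 hq).ne' ENNReal.ofReal_ne_top,
    ENNReal.toReal_ofReal hq.le] at h

end LpENNReal

section KFunctional

variable {X E A₀ A₁ : Type*} [AddCommGroup E] [Module ℝ E] [TopologicalSpace E]
  [NormedAddCommGroup A₀] [NormedSpace ℝ A₀] [NormedAddCommGroup A₁] [NormedSpace ℝ A₁]
  (ι₀ : A₀ →L[ℝ] E) (ι₁ : A₁ →L[ℝ] E) (t : ℝ)

/-- `K(t, e; A₀, A₁)`; it is `⊤` when `e ∉ A₀ + A₁`. -/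
noncomputable def kFunctional (e : E) : ℝ≥0∞ :=
  ⨅ d : {yz : A₀ × A₁ // ι₀ yz.1 + ι₁ yz.2 = e}, ‖d.1.1‖ₑ + ENNReal.ofReal t * ‖d.1.2‖ₑ

noncomputable def lpKFunctional [MeasurableSpace X] (μ : Measure X) (p : ℝ) (e : X → E) : ℝ≥0∞ :=
  ⨅ gh : {gh : (X → A₀) × (X → A₁) // (∀ x, ι₀ (gh.1 x) + ι₁ (gh.2 x) = e x) ∧
      AEStronglyMeasurable gh.1 μ ∧ AEStronglyMeasurable gh.2 μ},
    eLpNorm' gh.1.1 p μ + ENNReal.ofReal t * eLpNorm' gh.1.2 p μ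

theorem kFunctional_le (y : A₀) (z : A₁) :
    kFunctional ι₀ ι₁ t (ι₀ y + ι₁ z) ≤ ‖y‖ₑ + ENNReal.ofReal t * ‖z‖ₑ :=
  iInf_le_of_le ⟨(y, z), rfl⟩ le_rfl

theorem kFunctional_zero : kFunctional ι₀ ι₁ t 0 = 0 :=
  nonpos_iff_eq_zero.1 <| by simpa using kFunctional_le ι₀ ι₁ t 0 0

theorem kFunctional_map_left_le (y : A₀) : kFunctional ι₀ ι₁ t (ι₀ y) ≤ ‖y‖ₑ := by
  simpa using kFunctional_le ι₀ ι₁ t y 0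

theorem exists_decomposition_lt_kFunctional_add {e : E} (he : kFunctional ι₀ ι₁ t e ≠ ⊤)
    {δ : ℝ≥0∞} (hδ : δ ≠ 0) :
    ∃ y z, ι₀ y + ι₁ z = e ∧ ‖y‖ₑ + ENNReal.ofReal t * ‖z‖ₑ < kFunctional ι₀ ι₁ t e + δ := by
  obtain ⟨⟨⟨y, z⟩, hyz⟩, h⟩ := iInf_lt_iff.1 (ENNReal.lt_add_right he hδ)
  exact ⟨y, z, hyz, h⟩

variable {n : ℕ} {S : Fin n → Set X}

theorem exists_simpleFn_decomposition_le (hS : Pairwise (Disjoint on S)) (a : Fin n → A₀)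
    {δ : ℝ≥0∞} (hδ : δ ≠ 0) :
    ∃ (b₀ : Fin n → A₀) (b₁ : Fin n → A₁), ∀ x,
      ι₀ (simpleFn n S b₀ x) + ι₁ (simpleFn n S b₁ x) = ι₀ (simpleFn n S a x) ∧
      ‖simpleFn n S b₀ x‖ₑ + ENNReal.ofReal t * ‖simpleFn n S b₁ x‖ₑ ≤
        kFunctional ι₀ ι₁ t (ι₀ (simpleFn n S a x)) + (⋃ i, S i).indicator (fun _ => δ) x := by
  choose b₀ b₁ hb hlt using fun i => exists_decomposition_lt_kFunctional_add ι₀ ι₁ t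
    (ne_top_of_le_ne_top enorm_ne_top (kFunctional_map_left_le ι₀ ι₁ t (a i))) hδ
  refine ⟨b₀, b₁, fun x => ?_⟩
  by_cases hx : x ∈ ⋃ i, S i
  · obtain ⟨i, hi⟩ := Set.mem_iUnion.1 hx
    simp only [simpleFn_apply_of_mem hS _ hi, Set.indicator_of_mem hx]
    exact ⟨hb i, (hlt i).le⟩
  · simp [simpleFn_apply_of_notMem _ hx, hx]

variable [MeasurableSpace X] {μ : Measure X} {p : ℝ}

theorem eLpNorm'_kFunctional_le_lpKFunctional (hp : 1 ≤ p) (e : X → E) :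
    eLpNorm' (fun x => kFunctional ι₀ ι₁ t (e x)) p μ ≤ lpKFunctional ι₀ ι₁ t μ p e := by
  refine le_iInf fun ⟨⟨g, h⟩, hgh, hg, hh⟩ => ?_
  calc eLpNorm' (fun x => kFunctional ι₀ ι₁ t (e x)) p μ
      ≤ eLpNorm' (fun x => ‖g x‖ₑ + ENNReal.ofReal t * ‖h x‖ₑ) p μ :=
        eLpNorm'_mono_enorm_ae (by positivity) <| ae_of_all _ fun x => by
          simpa only [enorm_eq_self, ← hgh x] using kFunctional_le ι₀ ι₁ t (g x) (h x)
    _ ≤ eLpNorm' (fun x => ‖g x‖ₑ) p μ + eLpNorm' (fun x => ENNReal.ofReal t * ‖h x‖ₑ) p μ :=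
        eLpNorm'_add_le hg.enorm.aestronglyMeasurable
          (hh.enorm.const_mul _).aestronglyMeasurable hp
    _ = eLpNorm' g p μ + ENNReal.ofReal t * eLpNorm' h p μ := by
        rw [eLpNorm'_const_mul ENNReal.ofReal_ne_top (by positivity), eLpNorm'_enorm,
          eLpNorm'_enorm]

theorem lpKFunctional_le_of_forall_le (hp : 0 < p) {e : X → E} {g : X → A₀} {h : X → A₁}
    (hgh : ∀ x, ι₀ (g x) + ι₁ (h x) = e x) (hg : AEStronglyMeasurable g μ)
    (hh : AEStronglyMeasurable h μ) {R : X → ℝ≥0∞}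
    (hR : ∀ x, ‖g x‖ₑ + ENNReal.ofReal t * ‖h x‖ₑ ≤ R x) :
    lpKFunctional ι₀ ι₁ t μ p e ≤ 2 * eLpNorm' R p μ := by
  refine iInf_le_of_le ⟨(g, h), hgh, hg, hh⟩ ?_
  have hg_le : eLpNorm' g p μ ≤ eLpNorm' R p μ :=
    eLpNorm'_mono_enorm_ae hp.le <| ae_of_all _ fun x => le_self_add.trans (hR x)
  have hh_le : ENNReal.ofReal t * eLpNorm' h p μ ≤ eLpNorm' R p μ := by
    rw [← eLpNorm'_enorm, ← eLpNorm'_const_mul ENNReal.ofReal_ne_top hp]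
    exact eLpNorm'_mono_enorm_ae hp.le <| ae_of_all _ fun x => le_add_self.trans (hR x)
  exact (add_le_add hg_le hh_le).trans_eq (two_mul _).symm

theorem lpKFunctional_simpleFn_le (hp : 1 ≤ p) (hSm : ∀ i, MeasurableSet (S i))
    (hSfin : ∀ i, μ (S i) < ⊤) (hS : Pairwise (Disjoint on S)) (a : Fin n → A₀) :
    lpKFunctional ι₀ ι₁ t μ p (fun x => ι₀ (simpleFn n S a x)) ≤
      2 * eLpNorm' (fun x => kFunctional ι₀ ι₁ t (ι₀ (simpleFn n S a x))) p μ := by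
  have hU : MeasurableSet (⋃ i, S i) := .iUnion hSm
  have hU_fin : μ (⋃ i, S i) ≠ ⊤ :=
    ((measure_iUnion_fintype_le μ S).trans_lt (ENNReal.sum_lt_top.2 fun i _ => hSfin i)).ne
  have hK : StronglyMeasurable fun x => kFunctional ι₀ ι₁ t (ι₀ (simpleFn n S a x)) := by
    rw [← comp_def (fun v => kFunctional ι₀ ι₁ t (ι₀ v)),
      comp_simpleFn hS _ (by simp [kFunctional_zero]) a]
    exact stronglyMeasurable_simpleFn hSm _
  refine ENNReal.le_of_forall_pos_le_add_mul (c := 2 * μ (⋃ i, S i) ^ (1 / p))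
    (by finiteness) fun δ hδ => ?_
  obtain ⟨b₀, b₁, hb⟩ := exists_simpleFn_decomposition_le ι₀ ι₁ t hS a hδ.ne'
  calc _ ≤ 2 * eLpNorm' (fun x => kFunctional ι₀ ι₁ t (ι₀ (simpleFn n S a x)) +
          (⋃ i, S i).indicator (fun _ => δ) x) p μ :=
        lpKFunctional_le_of_forall_le ι₀ ι₁ t (by positivity) (fun x => (hb x).1)
          (stronglyMeasurable_simpleFn hSm _).aestronglyMeasurable
          (stronglyMeasurable_simpleFn hSm _).aestronglyMeasurable fun x => (hb x).2
    _ ≤ 2 * (eLpNorm' (fun x => kFunctional ι₀ ι₁ t (ι₀ (simpleFn n S a x))) p μ +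
          eLpNorm' ((⋃ i, S i).indicator fun _ => δ) p μ) := by
        gcongr
        exact eLpNorm'_add_le hK.aestronglyMeasurable
          (stronglyMeasurable_const.indicator hU).aestronglyMeasurable hp
    _ = _ := by
        rw [eLpNorm'_indicator_const hU (by positivity), enorm_eq_self]
        ring

end KFunctional

theorem Kfunctional_Lp_pointwise_general {X : Type*} [MeasurableSpace X] (μ : Measure X)
    {E : Type*} [AddCommGroup E] [Module ℝ E] [TopologicalSpace E]
    {A₀ A₁ : Type*} [NormedAddCommGroup A₀] [NormedSpace ℝ A₀]
    [NormedAddCommGroup A₁] [NormedSpace ℝ A₁]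
    (ι₀ : A₀ →L[ℝ] E) (ι₁ : A₁ →L[ℝ] E)
    (p : ℝ) (hp : 1 ≤ p) :
    ∃ c C : ℝ, 0 < c ∧ 0 < C ∧
      ∀ (n : ℕ) (S : Fin n → Set X) (a : Fin n → A₀) (b : Fin n → A₁),
        (∀ i, MeasurableSet (S i)) → (∀ i, μ (S i) < ⊤) →
        Pairwise (fun i j => Disjoint (S i) (S j)) →
        (∀ i, ι₀ (a i) = ι₁ (b i)) →
        ∀ t : ℝ, 0 < t →
          (ENNReal.ofReal c *
              (∫⁻ x, (⨅ d : {yz : A₀ × A₁ // ι₀ yz.1 + ι₁ yz.2 = ι₀ (simpleFn n S a x)},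
                  ENNReal.ofReal ‖d.val.1‖ + ENNReal.ofReal t * ENNReal.ofReal ‖d.val.2‖)
                    ^ p ∂μ) ^ (1 / p) ≤
            ⨅ gh : {gh : (X → A₀) × (X → A₁) //
                (∀ x, ι₀ (gh.1 x) + ι₁ (gh.2 x) = ι₀ (simpleFn n S a x)) ∧
                AEStronglyMeasurable gh.1 μ ∧ AEStronglyMeasurable gh.2 μ},
              ((∫⁻ x, ENNReal.ofReal ‖gh.val.1 x‖ ^ p ∂μ) ^ (1 / p) +
                ENNReal.ofReal t * (∫⁻ x, ENNReal.ofReal ‖gh.val.2 x‖ ^ p ∂μ) ^ (1 / p))) ∧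
          ((⨅ gh : {gh : (X → A₀) × (X → A₁) //
                (∀ x, ι₀ (gh.1 x) + ι₁ (gh.2 x) = ι₀ (simpleFn n S a x)) ∧
                AEStronglyMeasurable gh.1 μ ∧ AEStronglyMeasurable gh.2 μ},
              ((∫⁻ x, ENNReal.ofReal ‖gh.val.1 x‖ ^ p ∂μ) ^ (1 / p) +
                ENNReal.ofReal t * (∫⁻ x, ENNReal.ofReal ‖gh.val.2 x‖ ^ p ∂μ) ^ (1 / p))) ≤
            ENNReal.ofReal C *
              (∫⁻ x, (⨅ d : {yz : A₀ × A₁ // ι₀ yz.1 + ι₁ yz.2 = ι₀ (simpleFn n S a x)},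
                  ENNReal.ofReal ‖d.val.1‖ + ENNReal.ofReal t * ENNReal.ofReal ‖d.val.2‖)
                    ^ p ∂μ) ^ (1 / p)) := by
  refine ⟨1, 2, one_pos, two_pos, fun n S a _ hSm hSfin hS _ t _ => ?_⟩
  -- after `ofReal_norm` the two sides unfold to `eLpNorm'` of `kFunctional` and to `lpKFunctional`
  simp only [ofReal_norm, ENNReal.ofReal_one, one_mul, ENNReal.ofReal_ofNat]
  exact ⟨eLpNorm'_kFunctional_le_lpKFunctional ι₀ ι₁ t hp _,
    lpKFunctional_simpleFn_le ι₀ ι₁ t hp hSm hSfin hS a⟩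

/-- For a compatible Banach couple `(A₀, A₁)` (both continuously and injectively embedded
in a Hausdorff topological vector space `E`) and `1 ≤ p < ∞`, the K-functional of a
simple `A₀ ∩ A₁`-valued function for the couple `(L_p(A₀), L_p(A₁))` is equivalent,
with constants depending only on `p`, to the `L_p` norm of the pointwise K-functional. -/
theorem Kfunctional_Lp_pointwise {X : Type*} [MeasurableSpace X] (μ : Measure X)
    {E : Type*} [AddCommGroup E] [Module ℝ E] [TopologicalSpace E] [T2Space E]
    {A₀ A₁ : Type*} [NormedAddCommGroup A₀] [NormedSpace ℝ A₀] [CompleteSpace A₀]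
    [NormedAddCommGroup A₁] [NormedSpace ℝ A₁] [CompleteSpace A₁]
    (ι₀ : A₀ →L[ℝ] E) (ι₁ : A₁ →L[ℝ] E)
    (hι₀ : Function.Injective ι₀) (hι₁ : Function.Injective ι₁)
    (p : ℝ) (hp : 1 ≤ p) :
    ∃ c C : ℝ, 0 < c ∧ 0 < C ∧
      ∀ (n : ℕ) (S : Fin n → Set X) (a : Fin n → A₀) (b : Fin n → A₁),
        (∀ i, MeasurableSet (S i)) → (∀ i, μ (S i) < ⊤) →
        Pairwise (fun i j => Disjoint (S i) (S j)) →
        (∀ i, ι₀ (a i) = ι₁ (b i)) →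
        ∀ t : ℝ, 0 < t →
          (ENNReal.ofReal c *
              (∫⁻ x, (⨅ d : {yz : A₀ × A₁ // ι₀ yz.1 + ι₁ yz.2 = ι₀ (simpleFn n S a x)},
                  ENNReal.ofReal ‖d.val.1‖ + ENNReal.ofReal t * ENNReal.ofReal ‖d.val.2‖)
                    ^ p ∂μ) ^ (1 / p) ≤
            ⨅ gh : {gh : (X → A₀) × (X → A₁) //
                (∀ x, ι₀ (gh.1 x) + ι₁ (gh.2 x) = ι₀ (simpleFn n S a x)) ∧
                AEStronglyMeasurable gh.1 μ ∧ AEStronglyMeasurable gh.2 μ},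
              ((∫⁻ x, ENNReal.ofReal ‖gh.val.1 x‖ ^ p ∂μ) ^ (1 / p) +
                ENNReal.ofReal t * (∫⁻ x, ENNReal.ofReal ‖gh.val.2 x‖ ^ p ∂μ) ^ (1 / p))) ∧
          ((⨅ gh : {gh : (X → A₀) × (X → A₁) //
                (∀ x, ι₀ (gh.1 x) + ι₁ (gh.2 x) = ι₀ (simpleFn n S a x)) ∧
                AEStronglyMeasurable gh.1 μ ∧ AEStronglyMeasurable gh.2 μ},
              ((∫⁻ x, ENNReal.ofReal ‖gh.val.1 x‖ ^ p ∂μ) ^ (1 / p) +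
                ENNReal.ofReal t * (∫⁻ x, ENNReal.ofReal ‖gh.val.2 x‖ ^ p ∂μ) ^ (1 / p))) ≤
            ENNReal.ofReal C *
              (∫⁻ x, (⨅ d : {yz : A₀ × A₁ // ι₀ yz.1 + ι₁ yz.2 = ι₀ (simpleFn n S a x)},
                  ENNReal.ofReal ‖d.val.1‖ + ENNReal.ofReal t * ENNReal.ofReal ‖d.val.2‖)
                    ^ p ∂μ) ^ (1 / p)) :=
  Kfunctional_Lp_pointwise_general μ ι₀ ι₁ p hp
end
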